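/- arXiv:1807.06825 — 5 statements merged into one kernel-verified Lean document; each statement's English description precedes it below -/
import Mathlib

section
/- (Brezis–Gallouet inequality on 𝕋², homogeneous form, which is the classical core of Theorem 2.36 of the paper.) There is an absolute constant C > 0 with the following property: for every a : ℤ² → ℂ with ‖a‖_{h²} < ∞ and a not identically zero, one has Σ_{k∈ℤ²} |a(k)| ≤ C · ‖a‖_{h¹} · √(1 + log(1 + ‖a‖_{h²}/‖a‖_{h¹})). In particular, a function v on 𝕋² with Fourier coefficients a satisfies ‖v‖_{L^∞} ≤ C · ‖v‖_{H¹} · √(1 + log(1 + ‖v‖_{H²}/‖v‖_{H¹})). -/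
noncomputable section

/-- Squared Euclidean norm of a lattice point `k ∈ ℤ^d`. -/
def latSq {d : ℕ} (k : Fin d → ℤ) : ℝ := ∑ i, ((k i : ℝ)) ^ 2

/-- Weighted `ℓ²` (Sobolev) norm `‖a‖_{h^s} = (Σ_k (1+|k|²)^s |a(k)|²)^{1/2}` of a
family of Fourier coefficients `a : ℤ^d → ℂ`. -/
def hnorm {d : ℕ} (s : ℝ) (a : (Fin d → ℤ) → ℂ) : ℝ :=
  Real.sqrt (∑' k, (1 + latSq k) ^ s * ‖a k‖ ^ 2)

/-!
Write `w(k) = 1 + |k|²` and split the frequencies at `w = T`. By Cauchy–Schwarz the low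
frequencies contribute at most `‖a‖_{h¹} (Σ_{w ≤ T} w⁻¹)^{1/2} ≲ ‖a‖_{h¹} √(1 + log T)` and the
high ones at most `‖a‖_{h²} (Σ_{w > T} w⁻²)^{1/2} ≲ ‖a‖_{h²} T^{-1/4}`. Both lattice sums are
estimated by slicing `ℤ²` into lines and using `Σ_{j ∈ ℤ} (c + j²)⁻¹ ≤ 8 / √c`, which follows from
a telescoping bound. The choice `T = (‖a‖_{h²} / ‖a‖_{h¹})⁴` balances the two contributions.
-/

open Real

namespace BrezisGallouet

theorem summable_and_tsum_mul_le_sqrt_mul_sqrt {ι : Type*} {f g : ι → ℝ} (hf : ∀ i, 0 ≤ f i)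
    (hg : ∀ i, 0 ≤ g i) (hf2 : Summable fun i => f i ^ 2) (hg2 : Summable fun i => g i ^ 2) :
    (Summable fun i => f i * g i) ∧ ∑' i, f i * g i ≤ √(∑' i, f i ^ 2) * √(∑' i, g i ^ 2) := by
  have h := summable_and_inner_le_Lp_mul_Lq_tsum_of_nonneg HolderConjugate.two_two hf hg
    (by simpa only [rpow_two] using hf2) (by simpa only [rpow_two] using hg2)
  simpa only [rpow_two, sqrt_eq_rpow] using h

/-- Write `x = (√w x) (𝟙_{w ≤ T} / √w) + (w x) (𝟙_{w > T} / w)` and apply Cauchy–Schwarz to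
each piece. -/
theorem summable_and_tsum_le_of_freq_split {ι : Type*} {w x : ι → ℝ} (T : ℝ) (hw : ∀ i, 0 < w i)
    (hx : ∀ i, 0 ≤ x i) (h₁ : Summable fun i => w i * x i ^ 2)
    (h₂ : Summable fun i => w i ^ 2 * x i ^ 2)
    (hlow : Summable fun i => if w i ≤ T then (w i)⁻¹ else 0)
    (hhigh : Summable fun i => if w i ≤ T then 0 else (w i ^ 2)⁻¹) :
    Summable x ∧ ∑' i, x i ≤
      √(∑' i, w i * x i ^ 2) * √(∑' i, if w i ≤ T then (w i)⁻¹ else 0) +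
        √(∑' i, w i ^ 2 * x i ^ 2) * √(∑' i, if w i ≤ T then 0 else (w i ^ 2)⁻¹) := by
  set u : ι → ℝ := fun i => √(w i) * x i
  set v : ι → ℝ := fun i => if w i ≤ T then (√(w i))⁻¹ else 0
  set u' : ι → ℝ := fun i => w i * x i
  set v' : ι → ℝ := fun i => if w i ≤ T then 0 else (w i)⁻¹
  have hu : ∀ i, u i ^ 2 = w i * x i ^ 2 := fun i => by
    simp only [u, mul_pow, sq_sqrt (hw i).le]
  have hv : ∀ i, v i ^ 2 = if w i ≤ T then (w i)⁻¹ else 0 := fun i => by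
    simp only [v]; split_ifs <;> simp [inv_pow, sq_sqrt (hw i).le]
  have hu' : ∀ i, u' i ^ 2 = w i ^ 2 * x i ^ 2 := fun i => mul_pow _ _ _
  have hv' : ∀ i, v' i ^ 2 = if w i ≤ T then 0 else (w i ^ 2)⁻¹ := fun i => by
    simp only [v']; split_ifs <;> simp [inv_pow]
  have hsplit : ∀ i, u i * v i + u' i * v' i = x i := fun i => by
    simp only [u, v, u', v']
    split_ifs
    · rw [mul_zero, add_zero, mul_right_comm, mul_inv_cancel₀ (sqrt_pos.mpr (hw i)).ne', one_mul]
    · rw [mul_zero, zero_add, mul_right_comm, mul_inv_cancel₀ (hw i).ne', one_mul]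
  obtain ⟨hs, hb⟩ := summable_and_tsum_mul_le_sqrt_mul_sqrt (f := u) (g := v)
    (fun i => mul_nonneg (sqrt_nonneg _) (hx i)) (fun i => by positivity)
    (by simpa only [hu] using h₁) (by simpa only [hv] using hlow)
  obtain ⟨hs', hb'⟩ := summable_and_tsum_mul_le_sqrt_mul_sqrt (f := u') (g := v')
    (fun i => mul_nonneg (hw i).le (hx i)) (fun i => by have := hw i; positivity)
    (by simpa only [hu'] using h₂) (by simpa only [hv'] using hhigh)
  simp only [hu, hv, hu', hv'] at hb hb'
  refine ⟨(hs.add hs').congr hsplit, ?_⟩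
  calc ∑' i, x i = ∑' i, u i * v i + ∑' i, u' i * v' i := by
        rw [← hs.tsum_add hs']; exact tsum_congr fun i => (hsplit i).symm
    _ ≤ _ := add_le_add hb hb'

theorem summable_and_tsum_int_le_two_mul {f : ℤ → ℝ} (hf : ∀ i, 0 ≤ f i)
    (hneg : ∀ n : ℕ, f (-(n + 1)) ≤ f n) (hs : Summable fun n : ℕ => f n) :
    Summable f ∧ ∑' i, f i ≤ 2 * ∑' n : ℕ, f n := by
  have hs' : Summable fun n : ℕ => f (-(n + 1)) :=
    hs.of_nonneg_of_le (fun n => hf _) hneg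
  refine ⟨.of_nat_of_neg_add_one hs hs', ?_⟩
  rw [tsum_of_nat_of_neg_add_one hs hs', two_mul]
  exact add_le_add le_rfl (hs'.tsum_le_tsum hneg hs)

theorem summable_and_tsum_prod_le {α β : Type*} {f : α × β → ℝ} {g : α → ℝ} (hf : 0 ≤ f)
    (hfs : ∀ a, Summable fun b => f (a, b)) (hfg : ∀ a, ∑' b, f (a, b) ≤ g a)
    (hg : Summable g) : Summable f ∧ ∑' p, f p ≤ ∑' a, g a := by
  have houter : Summable fun a => ∑' b, f (a, b) :=
    hg.of_nonneg_of_le (fun a => tsum_nonneg fun b => hf _) hfg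
  have hsum : Summable f := (summable_prod_of_nonneg hf).mpr ⟨hfs, houter⟩
  exact ⟨hsum, hsum.tsum_prod ▸ houter.tsum_le_tsum hfg hg⟩

theorem inv_add_sq_le_sub_inv {s : ℝ} (hs : 1 ≤ s) (n : ℕ) :
    (s ^ 2 + n ^ 2)⁻¹ ≤ 4 * ((s + n)⁻¹ - (s + (n + 1 : ℕ))⁻¹) := by
  have hn : (0 : ℝ) ≤ n := n.cast_nonneg
  rw [Nat.cast_succ, inv_sub_inv (by positivity) (by positivity), ← mul_div_assoc,
    inv_eq_one_div, div_le_div_iff₀ (by positivity) (by positivity)]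
  nlinarith [sq_nonneg (s - n)]

open Finset in
theorem summable_and_tsum_nat_inv_add_sq_le {c : ℝ} (hc : 1 ≤ c) :
    (Summable fun n : ℕ => (c + n ^ 2)⁻¹) ∧ ∑' n : ℕ, (c + n ^ 2)⁻¹ ≤ 4 / √c := by
  have hs : 1 ≤ √c := one_le_sqrt.mpr hc
  have hpartial : ∀ N, ∑ n ∈ range N, (c + n ^ 2)⁻¹ ≤ 4 / √c := fun N => calc
    ∑ n ∈ range N, (c + n ^ 2)⁻¹ ≤ ∑ n ∈ range N, 4 * ((√c + n)⁻¹ - (√c + (n + 1 : ℕ))⁻¹) :=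
        sum_le_sum fun n _ => by
          simpa only [sq_sqrt (by linarith : 0 ≤ c)] using inv_add_sq_le_sub_inv hs n
    _ = 4 * ((√c)⁻¹ - (√c + N)⁻¹) := by
        rw [← mul_sum, sum_range_sub' (fun n : ℕ => (√c + n)⁻¹), Nat.cast_zero, add_zero]
    _ ≤ 4 / √c := by
        rw [div_eq_mul_inv]
        gcongr
        exact sub_le_self _ (by positivity)
  exact ⟨summable_of_sum_range_le (fun n => by positivity) hpartial,
    Real.tsum_le_of_sum_range_le (fun n => by positivity) hpartial⟩

theorem summable_and_tsum_int_inv_add_sq_le {c : ℝ} (hc : 1 ≤ c) :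
    (Summable fun j : ℤ => (c + (j : ℝ) ^ 2)⁻¹) ∧ ∑' j : ℤ, (c + (j : ℝ) ^ 2)⁻¹ ≤ 8 / √c := by
  obtain ⟨hs, hb⟩ := summable_and_tsum_nat_inv_add_sq_le hc
  have hneg : ∀ n : ℕ, (c + (((-(n + 1) : ℤ)) : ℝ) ^ 2)⁻¹ ≤ (c + ((n : ℤ) : ℝ) ^ 2)⁻¹ := by
    intro n
    have hn : (0 : ℝ) ≤ n := n.cast_nonneg
    exact inv_anti₀ (by positivity) (by push_cast; nlinarith)
  obtain ⟨hsum, hle⟩ := summable_and_tsum_int_le_two_mul (f := fun j : ℤ => (c + (j : ℝ) ^ 2)⁻¹)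
    (fun j => by positivity) hneg (by simpa only [Int.cast_natCast] using hs)
  refine ⟨hsum, hle.trans ?_⟩
  simp only [Int.cast_natCast]
  linarith [show 8 / √c = 2 * (4 / √c) by ring]

theorem summable_and_tsum_int_inv_add_sq_mul_sqrt_le {c : ℝ} (hc : 1 ≤ c) :
    (Summable fun j : ℤ => ((c + (j : ℝ) ^ 2) * √(c + (j : ℝ) ^ 2))⁻¹) ∧
      ∑' j : ℤ, ((c + (j : ℝ) ^ 2) * √(c + (j : ℝ) ^ 2))⁻¹ ≤ 8 / c := by
  obtain ⟨hs, hb⟩ := summable_and_tsum_int_inv_add_sq_le hc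
  have hc0 : 0 < c := by linarith
  have hterm : ∀ j : ℤ,
      ((c + (j : ℝ) ^ 2) * √(c + (j : ℝ) ^ 2))⁻¹ ≤ (√c)⁻¹ * (c + (j : ℝ) ^ 2)⁻¹ := by
    intro j
    rw [mul_inv, mul_comm]
    gcongr
    exact le_add_of_nonneg_right (sq_nonneg _)
  refine ⟨(hs.mul_left _).of_nonneg_of_le (fun j => by positivity) hterm, ?_⟩
  calc ∑' j : ℤ, ((c + (j : ℝ) ^ 2) * √(c + (j : ℝ) ^ 2))⁻¹
      ≤ ∑' j : ℤ, (√c)⁻¹ * (c + (j : ℝ) ^ 2)⁻¹ :=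
        ((hs.mul_left _).of_nonneg_of_le (fun j => by positivity) hterm).tsum_le_tsum hterm
          (hs.mul_left _)
    _ = (√c)⁻¹ * ∑' j : ℤ, (c + (j : ℝ) ^ 2)⁻¹ := tsum_mul_left
    _ ≤ (√c)⁻¹ * (8 / √c) := by gcongr
    _ = 8 / c := by rw [inv_mul_eq_div, div_div, mul_self_sqrt hc0.le]

open Finset in
theorem summable_and_tsum_nat_low_freq_le {R : ℝ} (hR : 1 ≤ R) :
    (Summable fun n : ℕ => if (n : ℝ) ^ 2 ≤ R ^ 2 then (√(1 + (n : ℝ) ^ 2))⁻¹ else 0) ∧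
      ∑' n : ℕ, (if (n : ℝ) ^ 2 ≤ R ^ 2 then (√(1 + (n : ℝ) ^ 2))⁻¹ else 0) ≤ 2 * (2 + log R) := by
  set N := ⌊R⌋₊
  have hR0 : 0 < R := by linarith
  have hsupp : ∀ n ∉ range (N + 1),
      (if (n : ℝ) ^ 2 ≤ R ^ 2 then (√(1 + (n : ℝ) ^ 2))⁻¹ else 0) = 0 := by
    intro n hn
    rw [if_neg]
    intro hnR
    exact hn (mem_range.mpr (Nat.lt_succ_of_le (Nat.le_floor
      ((pow_le_pow_iff_left₀ n.cast_nonneg hR0.le two_ne_zero).mp hnR))))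
  refine ⟨summable_of_ne_finset_zero hsupp, ?_⟩
  have hterm : ∀ n : ℕ, (if (n : ℝ) ^ 2 ≤ R ^ 2 then (√(1 + (n : ℝ) ^ 2))⁻¹ else 0)
      ≤ 2 * ((n + 1 : ℕ) : ℝ)⁻¹ := by
    intro n
    have hn : (0 : ℝ) ≤ n := n.cast_nonneg
    split_ifs
    · rw [← div_eq_mul_inv, inv_eq_one_div, div_le_div_iff₀ (by positivity) (by positivity),
        one_mul, Nat.cast_succ]
      have := le_sqrt_of_sq_le (show ((n + 1) / 2 : ℝ) ^ 2 ≤ 1 + n ^ 2 by nlinarith)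
      linarith
    · positivity
  have hN : (N : ℝ) + 1 ≤ 2 * R := by linarith [Nat.floor_le hR0.le]
  calc ∑' n : ℕ, (if (n : ℝ) ^ 2 ≤ R ^ 2 then (√(1 + (n : ℝ) ^ 2))⁻¹ else 0)
      ≤ ∑ n ∈ range (N + 1), 2 * ((n + 1 : ℕ) : ℝ)⁻¹ :=
        (tsum_eq_sum hsupp).trans_le (sum_le_sum fun n _ => hterm n)
    _ = 2 * (harmonic (N + 1) : ℝ) := by simp [harmonic, mul_sum]
    _ ≤ 2 * (1 + log (2 * R)) := by
        gcongr
        exact (harmonic_le_one_add_log _).trans (by push_cast; gcongr)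
    _ ≤ 2 * (2 + log R) := by
        rw [log_mul two_ne_zero hR0.ne']
        linarith [log_two_lt_d9]

theorem summable_and_tsum_int_low_freq_le {R : ℝ} (hR : 1 ≤ R) :
    (Summable fun i : ℤ => if (i : ℝ) ^ 2 ≤ R ^ 2 then (√(1 + (i : ℝ) ^ 2))⁻¹ else 0) ∧
      ∑' i : ℤ, (if (i : ℝ) ^ 2 ≤ R ^ 2 then (√(1 + (i : ℝ) ^ 2))⁻¹ else 0) ≤ 4 * (2 + log R) := by
  obtain ⟨hsℕ, hbℕ⟩ := summable_and_tsum_nat_low_freq_le hR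
  have hneg : ∀ n : ℕ,
      (if (((-(n + 1) : ℤ)) : ℝ) ^ 2 ≤ R ^ 2 then (√(1 + (((-(n + 1) : ℤ)) : ℝ) ^ 2))⁻¹ else 0) ≤
        if ((n : ℤ) : ℝ) ^ 2 ≤ R ^ 2 then (√(1 + ((n : ℤ) : ℝ) ^ 2))⁻¹ else 0 := by
    intro n
    have hn : (0 : ℝ) ≤ n := n.cast_nonneg
    have hsq : ((n : ℤ) : ℝ) ^ 2 ≤ (((-(n + 1) : ℤ)) : ℝ) ^ 2 := by push_cast; nlinarith
    split_ifs with h₁ h₂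
    · gcongr
    · exact absurd (hsq.trans h₁) h₂
    · positivity
    · rfl
  refine (summable_and_tsum_int_le_two_mul (fun i => by positivity) hneg
    (by simpa only [Int.cast_natCast] using hsℕ)).imp_right fun h => h.trans ?_
  simp only [Int.cast_natCast]
  linarith

theorem summable_and_tsum_prod_inv_mul_sqrt_le :
    (Summable fun p : ℤ × ℤ => ((1 + (p.1 : ℝ) ^ 2 + (p.2 : ℝ) ^ 2) *
      √(1 + (p.1 : ℝ) ^ 2 + (p.2 : ℝ) ^ 2))⁻¹) ∧
      ∑' p : ℤ × ℤ, ((1 + (p.1 : ℝ) ^ 2 + (p.2 : ℝ) ^ 2) *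
        √(1 + (p.1 : ℝ) ^ 2 + (p.2 : ℝ) ^ 2))⁻¹ ≤ 64 := by
  have hc : ∀ i : ℤ, 1 ≤ 1 + (i : ℝ) ^ 2 := fun i => le_add_of_nonneg_right (sq_nonneg _)
  obtain ⟨hs₁, hb₁⟩ := summable_and_tsum_int_inv_add_sq_le (le_refl (1 : ℝ))
  refine (summable_and_tsum_prod_le (g := fun i : ℤ => 8 * (1 + (i : ℝ) ^ 2)⁻¹)
    (fun p => ?_) (fun i => (summable_and_tsum_int_inv_add_sq_mul_sqrt_le (hc i)).1)
    (fun i => (summable_and_tsum_int_inv_add_sq_mul_sqrt_le (hc i)).2.trans_eq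
      (div_eq_mul_inv _ _)) (hs₁.mul_left 8)).imp_right fun h => h.trans ?_
  · positivity
  · rw [tsum_mul_left]
    linarith [show (8 : ℝ) / √1 = 8 by simp]

theorem summable_and_tsum_prod_low_freq_le {R : ℝ} (hR : 1 ≤ R) :
    (Summable fun p : ℤ × ℤ => if 1 + (p.1 : ℝ) ^ 2 + (p.2 : ℝ) ^ 2 ≤ R ^ 2 then
      (1 + (p.1 : ℝ) ^ 2 + (p.2 : ℝ) ^ 2)⁻¹ else 0) ∧
      ∑' p : ℤ × ℤ, (if 1 + (p.1 : ℝ) ^ 2 + (p.2 : ℝ) ^ 2 ≤ R ^ 2 then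
        (1 + (p.1 : ℝ) ^ 2 + (p.2 : ℝ) ^ 2)⁻¹ else 0) ≤ 32 * (2 + log R) := by
  set g : ℤ → ℝ := fun i => if (i : ℝ) ^ 2 ≤ R ^ 2 then (√(1 + (i : ℝ) ^ 2))⁻¹ else 0
  obtain ⟨hsg, hbg⟩ := summable_and_tsum_int_low_freq_le hR
  have hinner : ∀ i : ℤ, ∀ j : ℤ, (if 1 + (i : ℝ) ^ 2 + (j : ℝ) ^ 2 ≤ R ^ 2 then
      (1 + (i : ℝ) ^ 2 + (j : ℝ) ^ 2)⁻¹ else 0) ≤ (1 + (i : ℝ) ^ 2 + (j : ℝ) ^ 2)⁻¹ :=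
    fun i j => by split_ifs; exacts [le_rfl, by positivity]
  have hc : ∀ i : ℤ, 1 ≤ 1 + (i : ℝ) ^ 2 := fun i => le_add_of_nonneg_right (sq_nonneg _)
  have hslice : ∀ i : ℤ, Summable fun j : ℤ => if 1 + (i : ℝ) ^ 2 + (j : ℝ) ^ 2 ≤ R ^ 2 then
      (1 + (i : ℝ) ^ 2 + (j : ℝ) ^ 2)⁻¹ else 0 := fun i =>
    (summable_and_tsum_int_inv_add_sq_le (hc i)).1.of_nonneg_of_le
      (fun j => by split_ifs <;> positivity) (hinner i)
  have hslice_le : ∀ i : ℤ, ∑' j : ℤ, (if 1 + (i : ℝ) ^ 2 + (j : ℝ) ^ 2 ≤ R ^ 2 then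
      (1 + (i : ℝ) ^ 2 + (j : ℝ) ^ 2)⁻¹ else 0) ≤ 8 * g i := by
    intro i
    by_cases hi : (i : ℝ) ^ 2 ≤ R ^ 2
    · simp only [g, if_pos hi, ← div_eq_mul_inv]
      obtain ⟨hs, hb⟩ := summable_and_tsum_int_inv_add_sq_le (hc i)
      exact ((hslice i).tsum_le_tsum (hinner i) hs).trans hb
    · have hzero : ∀ j : ℤ, (if 1 + (i : ℝ) ^ 2 + (j : ℝ) ^ 2 ≤ R ^ 2 then
          (1 + (i : ℝ) ^ 2 + (j : ℝ) ^ 2)⁻¹ else 0) = 0 :=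
        fun j => if_neg fun h => hi (by nlinarith [sq_nonneg (j : ℝ)])
      simp only [hzero, tsum_zero, g, if_neg hi, mul_zero, le_refl]
  refine (summable_and_tsum_prod_le (g := fun i => 8 * g i) (fun p => ?_) hslice hslice_le
    (hsg.mul_left 8)).imp_right fun h => h.trans ?_
  · split_ifs <;> positivity
  · rw [tsum_mul_left]
    linarith

theorem one_le_one_add_latSq {d : ℕ} (k : Fin d → ℤ) : 1 ≤ 1 + latSq k :=
  le_add_of_nonneg_right (Finset.sum_nonneg fun _ _ => sq_nonneg _)

theorem one_add_latSq_fin_two (p : ℤ × ℤ) :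
    1 + latSq ![p.1, p.2] = 1 + (p.1 : ℝ) ^ 2 + (p.2 : ℝ) ^ 2 := by
  simp [latSq, Fin.sum_univ_two, add_assoc]

theorem summable_and_tsum_fin_two_le_of_prod {F : ℝ → ℝ} {B : ℝ}
    (h : (Summable fun p : ℤ × ℤ => F (1 + (p.1 : ℝ) ^ 2 + (p.2 : ℝ) ^ 2)) ∧
      ∑' p : ℤ × ℤ, F (1 + (p.1 : ℝ) ^ 2 + (p.2 : ℝ) ^ 2) ≤ B) :
    (Summable fun k : Fin 2 → ℤ => F (1 + latSq k)) ∧ ∑' k : Fin 2 → ℤ, F (1 + latSq k) ≤ B := by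
  rw [← (finTwoArrowEquiv ℤ).symm.summable_iff, ← (finTwoArrowEquiv ℤ).symm.tsum_eq]
  simpa only [Function.comp_def, finTwoArrowEquiv_symm_apply, one_add_latSq_fin_two] using h

theorem summable_and_tsum_low_freq_le {R : ℝ} (hR : 1 ≤ R) :
    (Summable fun k : Fin 2 → ℤ => if 1 + latSq k ≤ R ^ 2 then (1 + latSq k)⁻¹ else 0) ∧
      ∑' k : Fin 2 → ℤ, (if 1 + latSq k ≤ R ^ 2 then (1 + latSq k)⁻¹ else 0) ≤
        32 * (2 + log R) :=
  summable_and_tsum_fin_two_le_of_prod (F := fun w => if w ≤ R ^ 2 then w⁻¹ else 0)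
    (summable_and_tsum_prod_low_freq_le hR)

/-- On `w > R²` one has `√w > R`, so `w⁻² ≤ R⁻¹ w^{-3/2}`. -/
theorem summable_and_tsum_high_freq_le {R : ℝ} (hR : 0 < R) :
    (Summable fun k : Fin 2 → ℤ => if 1 + latSq k ≤ R ^ 2 then 0 else ((1 + latSq k) ^ 2)⁻¹) ∧
      ∑' k : Fin 2 → ℤ, (if 1 + latSq k ≤ R ^ 2 then 0 else ((1 + latSq k) ^ 2)⁻¹) ≤ 64 / R := by
  obtain ⟨hs, hb⟩ := summable_and_tsum_fin_two_le_of_prod (F := fun w => (w * √w)⁻¹)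
    summable_and_tsum_prod_inv_mul_sqrt_le
  have hterm : ∀ k : Fin 2 → ℤ, (if 1 + latSq k ≤ R ^ 2 then 0 else ((1 + latSq k) ^ 2)⁻¹) ≤
      R⁻¹ * ((1 + latSq k) * √(1 + latSq k))⁻¹ := by
    intro k
    have hw : 0 < 1 + latSq k := one_pos.trans_le (one_le_one_add_latSq k)
    split_ifs with h
    · positivity
    · have hRw : R ≤ √(1 + latSq k) := le_sqrt_of_sq_le (not_le.mp h).le
      rw [← mul_inv]
      refine inv_anti₀ (by positivity) ?_
      calc R * ((1 + latSq k) * √(1 + latSq k))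
          ≤ √(1 + latSq k) * ((1 + latSq k) * √(1 + latSq k)) := by gcongr
        _ = (1 + latSq k) ^ 2 := by rw [mul_left_comm, mul_self_sqrt hw.le, sq]
  have hsum := (hs.mul_left R⁻¹).of_nonneg_of_le
    (fun k => by have := one_le_one_add_latSq k; split_ifs <;> positivity) hterm
  refine ⟨hsum, (hsum.tsum_le_tsum hterm (hs.mul_left _)).trans ?_⟩
  rw [tsum_mul_left, div_eq_inv_mul]
  gcongr

theorem summable_weight_rpow_of_le {d : ℕ} {s t : ℝ} {a : (Fin d → ℤ) → ℂ} (hst : s ≤ t)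
    (h : Summable fun k => (1 + latSq k) ^ t * ‖a k‖ ^ 2) :
    Summable fun k => (1 + latSq k) ^ s * ‖a k‖ ^ 2 :=
  h.of_nonneg_of_le (fun k => by have := one_le_one_add_latSq k; positivity) fun k =>
    mul_le_mul_of_nonneg_right (rpow_le_rpow_of_exponent_le (one_le_one_add_latSq k) hst)
      (sq_nonneg _)

theorem hnorm_le_hnorm {d : ℕ} {s t : ℝ} {a : (Fin d → ℤ) → ℂ} (hst : s ≤ t)
    (h : Summable fun k => (1 + latSq k) ^ t * ‖a k‖ ^ 2) : hnorm s a ≤ hnorm t a :=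
  sqrt_le_sqrt <| (summable_weight_rpow_of_le hst h).tsum_le_tsum (fun k =>
    mul_le_mul_of_nonneg_right (rpow_le_rpow_of_exponent_le (one_le_one_add_latSq k) hst)
      (sq_nonneg _)) h

theorem hnorm_pos {d : ℕ} {s : ℝ} {a : (Fin d → ℤ) → ℂ}
    (h : Summable fun k => (1 + latSq k) ^ s * ‖a k‖ ^ 2) (ha : a ≠ 0) : 0 < hnorm s a := by
  obtain ⟨k, hk⟩ := Function.ne_iff.mp ha
  have := one_le_one_add_latSq k
  have := norm_pos_iff.mpr hk
  exact sqrt_pos.mpr (h.tsum_pos (fun k => by have := one_le_one_add_latSq k; positivity) k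
    (by positivity))

theorem sqrt_log_balance_le {m t : ℝ} (hm : 0 ≤ m) (ht : 1 ≤ t) :
    m * √(32 * (2 + log (t ^ 2))) + m * t * √(64 / t ^ 2) ≤ 16 * m * √(1 + log (1 + t)) := by
  have hlow : √(32 * (2 + log (t ^ 2))) = 8 * √(1 + log t) := by
    rw [log_pow, show 32 * (2 + ((2 : ℕ) : ℝ) * log t) = 8 ^ 2 * (1 + log t) by push_cast; ring,
      sqrt_mul (by norm_num), sqrt_sq (by norm_num)]
  have hhigh : t * √(64 / t ^ 2) = 8 := by
    rw [show 64 / t ^ 2 = (8 / t) ^ 2 by ring, sqrt_sq (by positivity)]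
    field_simp
  have hL : √(1 + log t) ≤ √(1 + log (1 + t)) := by gcongr; linarith
  have hL₁ : 1 ≤ √(1 + log (1 + t)) :=
    one_le_sqrt.mpr (le_add_of_nonneg_right (log_nonneg (by linarith)))
  rw [hlow, mul_assoc m t, hhigh]
  nlinarith

end BrezisGallouet

open BrezisGallouet

/-- **Brezis–Gallouet inequality on `𝕋²`, homogeneous form.** There is an absolute
constant `C > 0` such that every nonzero `a : ℤ² → ℂ` with `‖a‖_{h²} < ∞` satisfies
`Σ_k |a(k)| ≤ C ‖a‖_{h¹} √(1 + log(1 + ‖a‖_{h²}/‖a‖_{h¹}))`. -/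
theorem brezis_gallouet_homogeneous :
    ∃ C : ℝ, 0 < C ∧ ∀ a : (Fin 2 → ℤ) → ℂ,
      Summable (fun k => (1 + latSq k) ^ (2 : ℝ) * ‖a k‖ ^ 2) →
      a ≠ 0 →
      Summable (fun k => ‖a k‖) ∧
      ∑' k, ‖a k‖ ≤ C * hnorm 1 a *
        Real.sqrt (1 + Real.log (1 + hnorm 2 a / hnorm 1 a)) := by
  refine ⟨16, by norm_num, fun a h₂ ha => ?_⟩
  have h₁ := summable_weight_rpow_of_le one_le_two h₂
  have hm : 0 < hnorm 1 a := hnorm_pos h₁ ha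
  have ht : 1 ≤ hnorm 2 a / hnorm 1 a := (one_le_div hm).mpr (hnorm_le_hnorm one_le_two h₂)
  set t := hnorm 2 a / hnorm 1 a
  have hM : hnorm 2 a = hnorm 1 a * t := by rw [mul_div_cancel₀ _ hm.ne']
  obtain ⟨hlow, hlow_le⟩ := summable_and_tsum_low_freq_le (one_le_pow₀ ht (n := 2))
  obtain ⟨hhigh, hhigh_le⟩ := summable_and_tsum_high_freq_le (R := t ^ 2) (by positivity)
  simp only [rpow_one, rpow_two] at h₁ h₂
  obtain ⟨hsum, hle⟩ := summable_and_tsum_le_of_freq_split (x := fun k => ‖a k‖) ((t ^ 2) ^ 2)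
    (fun k => one_pos.trans_le (one_le_one_add_latSq k)) (fun k => norm_nonneg _) h₁ h₂ hlow hhigh
  refine ⟨hsum, hle.trans ?_⟩
  calc _ ≤ hnorm 1 a * √(32 * (2 + log (t ^ 2))) + hnorm 2 a * √(64 / t ^ 2) := by
        simp only [hnorm, rpow_one, rpow_two]
        gcongr
    _ ≤ 16 * hnorm 1 a * √(1 + log (1 + t)) := hM ▸ sqrt_log_balance_le hm.le ht
end
end

section
/- (Frequency–splitting estimates on ℤ², the two quantitative steps in the paper's proof of its Brezis–Gallouet inequality.) There is an absolute constant C > 0 such that for every a : ℤ² → ℂ and every real R ≥ 2 one has both (i) Σ_{k∈ℤ², |k|≤R} |a(k)| ≤ C · √(log R) · ‖a‖_{h¹}, and (ii) Σ_{k∈ℤ², |k|>R} |a(k)| ≤ C · R^{−1} · ‖a‖_{h²}. -/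
noncomputable section

open scoped ENNReal

/-- Weighted `ℓ²` (Sobolev) norm `‖a‖_{h^s} = (Σ_k (1+|k|²)^s |a(k)|²)^{1/2}`,
valued in `ℝ≥0∞` so that it is meaningful for arbitrary coefficient families. -/
def ehnorm {d : ℕ} (s : ℝ) (a : (Fin d → ℤ) → ℂ) : ℝ≥0∞ :=
  (∑' k, ENNReal.ofReal ((1 + latSq k) ^ s * ‖a k‖ ^ 2)) ^ (1 / 2 : ℝ)

/-! Cauchy–Schwarz with the weight `(1 + |k|²)^s` reduces both estimates to bounds on
`Σ (1 + |k|²)^(-s)` over the two frequency regions. These lattice sums are computed by grouping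
`k` according to `n = ‖k‖_∞`: there are `8 n` such points for `n ≥ 1`, and `n² ≤ |k|² ≤ 2 n²`,
so they become `Σ_{n ≤ R} 8 n / (1 + n²) ≲ log R` (a harmonic sum) and
`Σ_{n > R/2} 8 / n³ ≲ R⁻²`. -/

theorem ENNReal.inner_le_L2_mul_L2_tsum {ι : Type*} (f g : ι → ℝ≥0∞) :
    ∑' i, f i * g i ≤
      (∑' i, f i ^ (2 : ℝ)) ^ (1 / 2 : ℝ) * (∑' i, g i ^ (2 : ℝ)) ^ (1 / 2 : ℝ) := by
  rw [ENNReal.tsum_eq_iSup_sum]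
  refine iSup_le fun s => (ENNReal.inner_le_Lp_mul_Lq s f g .two_two).trans ?_
  gcongr <;> exact ENNReal.sum_le_tsum s

lemma latSq_nonneg {d : ℕ} (k : Fin d → ℤ) : 0 ≤ latSq k :=
  Finset.sum_nonneg fun _ _ => sq_nonneg _

lemma ENNReal.ofReal_rpow_two {x : ℝ} (hx : 0 ≤ x) :
    ENNReal.ofReal x ^ (2 : ℝ) = ENNReal.ofReal (x ^ 2) := by
  rw [ENNReal.ofReal_rpow_of_nonneg hx (by norm_num), Real.rpow_two]

lemma tsum_ofReal_norm_le_mul_ehnorm {d : ℕ} (s : ℝ) (a : (Fin d → ℤ) → ℂ)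
    (S : Set (Fin d → ℤ)) :
    ∑' k : S, ENNReal.ofReal ‖a k‖ ≤
      (∑' k : S, ENNReal.ofReal ((1 + latSq (k : Fin d → ℤ)) ^ (-s))) ^ (1 / 2 : ℝ) *
        ehnorm s a := by
  have hpos (k : Fin d → ℤ) : 0 < 1 + latSq k := by linarith [latSq_nonneg k]
  have hsplit (k : Fin d → ℤ) : ENNReal.ofReal ‖a k‖ =
      ENNReal.ofReal ((1 + latSq k) ^ (-s / 2)) *
        ENNReal.ofReal ((1 + latSq k) ^ (s / 2) * ‖a k‖) := by
    rw [← ENNReal.ofReal_mul (Real.rpow_nonneg (hpos k).le _), ← mul_assoc,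
      ← Real.rpow_add (hpos k), neg_div, neg_add_cancel, Real.rpow_zero, one_mul]
  calc ∑' k : S, ENNReal.ofReal ‖a k‖
      = ∑' k : S, ENNReal.ofReal ((1 + latSq (k : Fin d → ℤ)) ^ (-s / 2)) *
          ENNReal.ofReal ((1 + latSq (k : Fin d → ℤ)) ^ (s / 2) * ‖a k‖) :=
        tsum_congr fun k => hsplit k
    _ ≤ _ := ENNReal.inner_le_L2_mul_L2_tsum _ _
    _ ≤ _ := by
      rw [ehnorm]
      gcongr with k
      · rw [ENNReal.ofReal_rpow_two (Real.rpow_nonneg (hpos k).le _), ← Real.rpow_natCast,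
          ← Real.rpow_mul (hpos k).le]
        norm_num
      · refine le_trans (le_of_eq (tsum_congr fun k => ?_))
          (ENNReal.tsum_comp_le_tsum_of_injective Subtype.val_injective _)
        rw [ENNReal.ofReal_rpow_two (mul_nonneg (Real.rpow_nonneg (hpos k).le _) (norm_nonneg _)),
          mul_pow, ← Real.rpow_natCast, ← Real.rpow_mul (hpos k).le]
        norm_num

def latSup (k : Fin 2 → ℤ) : ℕ := max (k 0).natAbs (k 1).natAbs

lemma latSq_fin_two (k : Fin 2 → ℤ) :
    latSq k = ((k 0).natAbs : ℝ) ^ 2 + ((k 1).natAbs : ℝ) ^ 2 := by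
  simp [latSq, Fin.sum_univ_two, Nat.cast_natAbs]

lemma sq_latSup_le_latSq (k : Fin 2 → ℤ) : (latSup k : ℝ) ^ 2 ≤ latSq k := by
  rw [latSq_fin_two, latSup, Nat.cast_max]
  rcases le_total ((k 0).natAbs : ℝ) (k 1).natAbs with h | h <;>
    simp only [max_eq_left, max_eq_right, h] <;> nlinarith

lemma latSq_le_two_mul_sq_latSup (k : Fin 2 → ℤ) : latSq k ≤ 2 * (latSup k : ℝ) ^ 2 := by
  rw [latSq_fin_two, latSup, Nat.cast_max]
  rcases le_total ((k 0).natAbs : ℝ) (k 1).natAbs with h | h <;>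
    simp only [max_eq_left, max_eq_right, h] <;>
    nlinarith [Nat.cast_nonneg (α := ℝ) (k 0).natAbs, Nat.cast_nonneg (α := ℝ) (k 1).natAbs]

lemma tsum_le_of_le_max_natAbs (f : ℤ × ℤ → ℝ≥0∞) (φ : ℕ → ℝ≥0∞)
    (hf : ∀ x : ℤ × ℤ, f x ≤ φ (max x.1.natAbs x.2.natAbs)) :
    ∑' x, f x ≤ φ 0 + ∑' n : ℕ, 8 * n * φ n := by
  have hfiber (n : ℕ) : (fun x : ℤ × ℤ => max x.1.natAbs x.2.natAbs) ⁻¹' {n} =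
      ((Finset.box n : Finset (ℤ × ℤ)) : Set (ℤ × ℤ)) := by
    ext x; simp
  have hbox (n : ℕ) : ∑' x : (fun x : ℤ × ℤ => max x.1.natAbs x.2.natAbs) ⁻¹' {n}, f x ≤
      (Finset.box n : Finset (ℤ × ℤ)).card * φ n := by
    rw [hfiber, Finset.tsum_subtype', ← nsmul_eq_mul]
    exact Finset.sum_le_card_nsmul _ _ _ fun x hx => by simpa [Int.mem_box.mp hx] using hf x
  rw [← ENNReal.tsum_fiberwise f (fun x : ℤ × ℤ => max x.1.natAbs x.2.natAbs),
    ENNReal.tsum_eq_add_tsum_ite 0]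
  gcongr with n
  · simpa using hbox 0
  · split_ifs with hn
    · exact zero_le
    · simpa [Int.card_box hn] using hbox n

lemma tsum_le_of_le_latSup (f : (Fin 2 → ℤ) → ℝ≥0∞) (φ : ℕ → ℝ≥0∞)
    (hf : ∀ k, f k ≤ φ (latSup k)) :
    ∑' k, f k ≤ φ 0 + ∑' n : ℕ, 8 * n * φ n := by
  rw [← (finTwoArrowEquiv ℤ).symm.tsum_eq]
  exact tsum_le_of_le_max_natAbs _ φ fun x => hf _

lemma sum_range_succ_div_one_add_sq_le (N : ℕ) :
    ∑ n ∈ Finset.range (N + 1), (n : ℝ) / (1 + n ^ 2) ≤ 1 + Real.log N := by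
  refine le_trans ?_ (harmonic_le_one_add_log N)
  rw [Finset.sum_range_succ', harmonic, Rat.cast_sum]
  simp only [Nat.cast_zero, zero_div, add_zero]
  gcongr with i
  push_cast
  rw [div_le_iff₀ (by positivity)]
  field_simp
  nlinarith

lemma tsum_ite_lt_inv_pow_three_le (M : ℕ) :
    ∑' n : ℕ, (if M < n then ENNReal.ofReal ((n : ℝ) ^ 3)⁻¹ else 0) ≤
      ENNReal.ofReal (2 / (M + 1) ^ 2) := by
  refine ENNReal.tsum_le_of_sum_range_le fun N => ?_
  have hfilter : (Finset.range N).filter (M < ·) = Finset.Ioo M N := by ext; simp; omega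
  rw [← Finset.sum_filter, hfilter, ← ENNReal.ofReal_sum_of_nonneg (fun _ _ => by positivity)]
  refine ENNReal.ofReal_le_ofReal ?_
  calc ∑ i ∈ Finset.Ioo M N, ((i : ℝ) ^ 3)⁻¹
      ≤ ∑ i ∈ Finset.Ioo M N, ((M : ℝ) + 1)⁻¹ * ((i : ℝ) ^ 2)⁻¹ := by
        gcongr with i hi
        have hMi : (M : ℝ) + 1 ≤ i := by exact_mod_cast (Finset.mem_Ioo.mp hi).1
        rw [pow_succ', mul_inv]
        gcongr
    _ = ((M : ℝ) + 1)⁻¹ * ∑ i ∈ Finset.Ioo M N, ((i : ℝ) ^ 2)⁻¹ := (Finset.mul_sum _ _ _).symm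
    _ ≤ ((M : ℝ) + 1)⁻¹ * (2 / (M + 1)) := by gcongr; exact sum_Ioo_inv_sq_le M N
    _ = 2 / (M + 1) ^ 2 := by field_simp

lemma ENNReal.ofReal_sq_rpow_half {y : ℝ} (hy : 0 ≤ y) :
    ENNReal.ofReal (y ^ 2) ^ (1 / 2 : ℝ) = ENNReal.ofReal y := by
  rw [ENNReal.ofReal_rpow_of_nonneg (by positivity) (by norm_num), ← Real.sqrt_eq_rpow,
    Real.sqrt_sq hy]

lemma tsum_rpow_neg_one_latSq_le {R : ℝ} (hR : 2 ≤ R) :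
    ∑' k : {k : Fin 2 → ℤ | √(latSq k) ≤ R},
        ENNReal.ofReal ((1 + latSq (k : Fin 2 → ℤ)) ^ (-1 : ℝ)) ≤
      ENNReal.ofReal (64 * Real.log R) := by
  set N := ⌊R⌋₊
  let φ : ℕ → ℝ≥0∞ := fun n => if n ≤ N then ENNReal.ofReal (1 + (n : ℝ) ^ 2)⁻¹ else 0
  have hbound (k : Fin 2 → ℤ) : {k | √(latSq k) ≤ R}.indicator
      (fun k => ENNReal.ofReal ((1 + latSq k) ^ (-1 : ℝ))) k ≤ φ (latSup k) := by
    by_cases hk : √(latSq k) ≤ R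
    · have hsup := sq_latSup_le_latSq k
      have hlat : latSq k ≤ R ^ 2 := (Real.sqrt_le_left (by linarith)).mp hk
      have hN : latSup k ≤ N := Nat.le_floor (by nlinarith)
      simp only [Set.indicator_of_mem (show k ∈ {k | √(latSq k) ≤ R} from hk), φ, if_pos hN,
        Real.rpow_neg_one]
      gcongr
    · simp [Set.indicator_of_notMem (show k ∉ {k | √(latSq k) ≤ R} from hk)]
  have hN1 : (1 : ℝ) ≤ N := by exact_mod_cast Nat.le_floor (by norm_num; linarith)
  have hNR : Real.log N ≤ Real.log R := Real.log_le_log (by linarith) (Nat.floor_le (by linarith))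
  have hlog2 : Real.log 2 ≤ Real.log R := Real.log_le_log (by norm_num) hR
  calc _ = ∑' k, {k | √(latSq k) ≤ R}.indicator
          (fun k => ENNReal.ofReal ((1 + latSq k) ^ (-1 : ℝ))) k := tsum_subtype _ _
    _ ≤ φ 0 + ∑' n : ℕ, 8 * n * φ n := tsum_le_of_le_latSup _ _ hbound
    _ = ENNReal.ofReal 1 +
          ∑ n ∈ Finset.range (N + 1), ENNReal.ofReal (8 * ((n : ℝ) / (1 + n ^ 2))) := by
        congr 1
        · simp [φ]
        · rw [tsum_eq_sum (s := Finset.range (N + 1)) fun n hn => by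
            simp [φ, show ¬ n ≤ N by simpa [Nat.lt_succ_iff] using hn]]
          refine Finset.sum_congr rfl fun n hn => ?_
          rw [show φ n = _ from if_pos (Nat.lt_succ_iff.mp (Finset.mem_range.mp hn)),
            ← ENNReal.ofReal_natCast, ← ENNReal.ofReal_ofNat 8, ← ENNReal.ofReal_mul (by norm_num),
            ← ENNReal.ofReal_mul (by positivity), div_eq_mul_inv, mul_assoc]
    _ = ENNReal.ofReal (1 + 8 * ∑ n ∈ Finset.range (N + 1), (n : ℝ) / (1 + n ^ 2)) := by
        rw [Finset.mul_sum, ← ENNReal.ofReal_sum_of_nonneg (fun _ _ => by positivity),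
          ← ENNReal.ofReal_add (by norm_num) (by positivity)]
    _ ≤ ENNReal.ofReal (64 * Real.log R) := by
        gcongr
        have := sum_range_succ_div_one_add_sq_le N
        have := Real.log_two_gt_d9
        nlinarith

lemma tsum_rpow_neg_two_latSq_le {R : ℝ} (hR : 2 ≤ R) :
    ∑' k : {k : Fin 2 → ℤ | R < √(latSq k)},
        ENNReal.ofReal ((1 + latSq (k : Fin 2 → ℤ)) ^ (-2 : ℝ)) ≤
      ENNReal.ofReal (64 / R ^ 2) := by
  set M := ⌊R / 2⌋₊
  let φ : ℕ → ℝ≥0∞ := fun n => if M < n then ENNReal.ofReal ((n : ℝ) ^ 4)⁻¹ else 0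
  have hbound (k : Fin 2 → ℤ) : {k | R < √(latSq k)}.indicator
      (fun k => ENNReal.ofReal ((1 + latSq k) ^ (-2 : ℝ))) k ≤ φ (latSup k) := by
    by_cases hk : R < √(latSq k)
    · have hsup := sq_latSup_le_latSq k
      have hsup' := latSq_le_two_mul_sq_latSup k
      have hlat : R ^ 2 < latSq k := (Real.lt_sqrt (by linarith)).mp hk
      have hR2 : R / 2 < latSup k := by nlinarith [Nat.cast_nonneg (α := ℝ) (latSup k)]
      have hM : M < latSup k := (Nat.floor_lt (by linarith)).mpr hR2
      have hsup0 : (0 : ℝ) < latSup k := by exact_mod_cast (Nat.zero_le M).trans_lt hM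
      simp only [Set.indicator_of_mem (show k ∈ {k | R < √(latSq k)} from hk), φ, if_pos hM,
        Real.rpow_neg (by linarith : (0 : ℝ) ≤ 1 + latSq k), Real.rpow_two,
        show (latSup k : ℝ) ^ 4 = ((latSup k : ℝ) ^ 2) ^ 2 by ring]
      gcongr
      linarith
    · simp [Set.indicator_of_notMem (show k ∉ {k | R < √(latSq k)} from hk)]
  have hterm (n : ℕ) :
      8 * n * φ n ≤ 8 * (if M < n then ENNReal.ofReal ((n : ℝ) ^ 3)⁻¹ else 0) := by
    simp only [φ]
    split_ifs with hn
    · have : (0 : ℝ) < n := by exact_mod_cast (Nat.zero_le M).trans_lt hn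
      rw [mul_assoc, ← ENNReal.ofReal_natCast, ← ENNReal.ofReal_mul this.le]
      field_simp
      rfl
    · simp
  have hM : R / 2 ≤ M + 1 := (Nat.lt_floor_add_one _).le
  calc _ = ∑' k, {k | R < √(latSq k)}.indicator
          (fun k => ENNReal.ofReal ((1 + latSq k) ^ (-2 : ℝ))) k := tsum_subtype _ _
    _ ≤ φ 0 + ∑' n : ℕ, 8 * n * φ n := tsum_le_of_le_latSup _ _ hbound
    _ ≤ 0 + ∑' n : ℕ, 8 * (if M < n then ENNReal.ofReal ((n : ℝ) ^ 3)⁻¹ else 0) :=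
        add_le_add (by simp [φ]) (ENNReal.tsum_le_tsum hterm)
    _ ≤ ENNReal.ofReal 8 * ENNReal.ofReal (2 / (M + 1) ^ 2) := by
        rw [zero_add, ENNReal.tsum_mul_left, ENNReal.ofReal_ofNat]
        gcongr
        exact tsum_ite_lt_inv_pow_three_le M
    _ ≤ ENNReal.ofReal (64 / R ^ 2) := by
        rw [← ENNReal.ofReal_mul (by norm_num)]
        gcongr
        rw [mul_div_assoc', div_le_div_iff₀ (by positivity) (by positivity)]
        nlinarith

/-- **Frequency-splitting estimates on `ℤ²`.** There is an absolute constant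
`C > 0` such that for every `a : ℤ² → ℂ` and every `R ≥ 2`:
(i) `Σ_{|k| ≤ R} |a(k)| ≤ C √(log R) ‖a‖_{h¹}` and
(ii) `Σ_{|k| > R} |a(k)| ≤ C R⁻¹ ‖a‖_{h²}`. -/
theorem frequency_splitting :
    ∃ C : ℝ, 0 < C ∧ ∀ (a : (Fin 2 → ℤ) → ℂ) (R : ℝ), 2 ≤ R →
      (∑' k : {k : Fin 2 → ℤ // Real.sqrt (latSq k) ≤ R}, ENNReal.ofReal ‖a k.1‖)
        ≤ ENNReal.ofReal (C * Real.sqrt (Real.log R)) * ehnorm 1 a ∧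
      (∑' k : {k : Fin 2 → ℤ // R < Real.sqrt (latSq k)}, ENNReal.ofReal ‖a k.1‖)
        ≤ ENNReal.ofReal (C * R⁻¹) * ehnorm 2 a := by
  refine ⟨8, by norm_num, fun a R hR => ⟨?_, ?_⟩⟩
  · refine (tsum_ofReal_norm_le_mul_ehnorm 1 a {k | √(latSq k) ≤ R}).trans ?_
    gcongr
    calc _ ≤ ENNReal.ofReal (64 * Real.log R) ^ (1 / 2 : ℝ) := by
          gcongr
          exact tsum_rpow_neg_one_latSq_le hR
      _ = ENNReal.ofReal ((8 * √(Real.log R)) ^ 2) ^ (1 / 2 : ℝ) := by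
          rw [mul_pow, Real.sq_sqrt (Real.log_nonneg (by linarith))]
          norm_num
      _ = _ := ENNReal.ofReal_sq_rpow_half (by positivity)
  · have hR0 : 0 < R := by linarith
    refine (tsum_ofReal_norm_le_mul_ehnorm 2 a {k | R < √(latSq k)}).trans ?_
    gcongr
    calc _ ≤ ENNReal.ofReal (64 / R ^ 2) ^ (1 / 2 : ℝ) := by
          gcongr
          exact tsum_rpow_neg_two_latSq_le hR
      _ = ENNReal.ofReal ((8 * R⁻¹) ^ 2) ^ (1 / 2 : ℝ) := by ring_nf
      _ = _ := ENNReal.ofReal_sq_rpow_half (by positivity)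
end
end

section
/- (Logarithmic Gronwall lemma, Lemma 3.7 of the paper, with the comparison constant made precise.) Let C₁ ≥ e and C₂ ≥ 1 be real numbers. Let θ : [0,∞) → ℝ be continuous with θ(t) ≥ 1 for all t ≥ 0, and suppose that θ(t) ≤ C₁ + C₂ ∫₀ᵗ θ(s) log(1 + θ(s)) ds for all t ≥ 0. Define h(t) := C₁ + C₂ ∫₀ᵗ θ(s) log(1 + θ(s)) ds. Then for all t ≥ 0 one has θ(t) ≤ h(t) ≤ exp( log(1 + h(0)) · e^{C₂ t} ) − 1, where h(0) = C₁. -/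
open MeasureTheory intervalIntegral Set Real

/-! Along the comparison ODE `ρ' = C₂ (1 + ρ) log (1 + ρ)` the quantity `log (1 + ρ)` grows
exactly like `e^{C₂ t}`. Since `θ ≤ h`, the right-hand side `h` of the hypothesis satisfies
`h' = C₂ θ log (1 + θ) ≤ C₂ (1 + h) log (1 + h)`, so `log (1 + h)` obeys the linear differential
inequality `g' ≤ C₂ g`, and the classical Grönwall inequality bounds it by
`log (1 + h 0) e^{C₂ t}`. -/

theorem log_le_log_mul_exp_of_deriv_right_le {v v' : ℝ → ℝ} {K a b : ℝ}
    (hv : ContinuousOn v (Icc a b)) (hv' : ∀ x ∈ Ico a b, HasDerivWithinAt v (v' x) (Ici x) x)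
    (hpos : ∀ x ∈ Icc a b, 0 < v x) (bound : ∀ x ∈ Ico a b, v' x ≤ K * (v x * log (v x))) :
    ∀ x ∈ Icc a b, log (v x) ≤ log (v a) * exp (K * (x - a)) := by
  intro x hx
  have hlog_deriv : ∀ y ∈ Ico a b, HasDerivWithinAt (fun z => log (v z)) (v' y / v y) (Ici y) y :=
    fun y hy => (hv' y hy).log (hpos y (Ico_subset_Icc_self hy)).ne'
  have hlog_bound : ∀ y ∈ Ico a b, v' y / v y ≤ K * log (v y) + 0 := by
    intro y hy
    have hvy := hpos y (Ico_subset_Icc_self hy)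
    rw [add_zero, div_le_iff₀ hvy, mul_assoc, mul_comm (log _)]
    exact bound y hy
  have := le_gronwallBound_of_liminf_deriv_right_le (hv.log fun y hy => (hpos y hy).ne')
    (fun y hy _ hr => (hlog_deriv y hy).liminf_right_slope_le hr) le_rfl hlog_bound x hx
  rwa [gronwallBound_ε0] at this

theorem hasDerivWithinAt_integral_Ici {E : Type*} [NormedAddCommGroup E] [NormedSpace ℝ E]
    [CompleteSpace E] {f : ℝ → E} {a x : ℝ} (hf : ContinuousOn f (Ici a)) (hx : a ≤ x) :
    HasDerivWithinAt (fun u => ∫ y in a..u, f y) (f x) (Ici x) x := by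
  have hIoi : Ioi x ⊆ Ici a := Ioi_subset_Ici hx
  refine integral_hasDerivWithinAt_right (t := Ioi x)
    ((hf.mono ?_).intervalIntegrable) ?_ ((hf x hx).mono hIoi)
  · rw [uIcc_of_le hx]
    exact Icc_subset_Ici_self
  · exact (hf.stronglyMeasurableAtFilter_nhdsWithin measurableSet_Ici x).filter_mono
      (nhdsWithin_mono x hIoi)

theorem continuousOn_primitive_Icc {E : Type*} [NormedAddCommGroup E] [NormedSpace ℝ E]
    {f : ℝ → E} {a b : ℝ} (hf : ContinuousOn f (Icc a b)) :
    ContinuousOn (fun u => ∫ y in a..u, f y) (Icc a b) := by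
  rcases le_or_gt a b with hab | hab
  · simpa [uIcc_of_le hab] using
      continuousOn_primitive_interval' (hf.intervalIntegrable_of_Icc hab) left_mem_uIcc
  · simp [Icc_eq_empty_of_lt hab]

theorem mul_log_one_add_le_mul_log_one_add {x y : ℝ} (hx : 0 ≤ x) (hxy : x ≤ y) :
    x * log (1 + x) ≤ (1 + y) * log (1 + y) :=
  mul_le_mul (by linarith) (log_le_log (by linarith) (by linarith))
    (log_nonneg (by linarith)) (by linarith)

/-- **Logarithmic Gronwall lemma** (Lemma 3.7 of Gubinelli–Ugurcan–Zachhuber).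
If `θ ≥ 1` is continuous on `[0,∞)` and satisfies
`θ(t) ≤ C₁ + C₂ ∫₀ᵗ θ(s) log(1+θ(s)) ds` with `C₁ ≥ e`, `C₂ ≥ 1`, then setting
`h(t) := C₁ + C₂ ∫₀ᵗ θ(s) log(1+θ(s)) ds` (so that `h(0) = C₁`) one has
`θ(t) ≤ h(t) ≤ exp(log(1+h(0)) · e^{C₂ t}) − 1` for all `t ≥ 0`. -/
theorem log_gronwall (C₁ C₂ : ℝ) (hC₁ : Real.exp 1 ≤ C₁) (hC₂ : 1 ≤ C₂)
    (θ : ℝ → ℝ) (hcont : ContinuousOn θ (Set.Ici (0 : ℝ)))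
    (hθ : ∀ t, 0 ≤ t → 1 ≤ θ t)
    (hineq : ∀ t, 0 ≤ t →
      θ t ≤ C₁ + C₂ * ∫ s in (0:ℝ)..t, θ s * Real.log (1 + θ s)) :
    ∀ t, 0 ≤ t →
      θ t ≤ C₁ + C₂ * (∫ s in (0:ℝ)..t, θ s * Real.log (1 + θ s)) ∧
      C₁ + C₂ * (∫ s in (0:ℝ)..t, θ s * Real.log (1 + θ s)) ≤
        Real.exp (Real.log (1 + C₁) * Real.exp (C₂ * t)) - 1 := by
  intro t ht
  refine ⟨hineq t ht, ?_⟩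
  set F : ℝ → ℝ := fun s => θ s * log (1 + θ s)
  set h : ℝ → ℝ := fun u => C₁ + C₂ * ∫ s in (0:ℝ)..u, F s
  have hF : ContinuousOn F (Ici 0) :=
    hcont.mul <| (continuousOn_const.add hcont).log fun s hs =>
      (show 0 < 1 + θ s by linarith [hθ s hs]).ne'
  have hC₁_le_h : ∀ u ∈ Icc 0 t, C₁ ≤ h u := fun u hu => le_add_of_nonneg_right <|
    mul_nonneg (by linarith) <| integral_nonneg hu.1 fun s hs =>
      mul_nonneg (by linarith [hθ s hs.1]) (log_nonneg (by linarith [hθ s hs.1]))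
  have hC₁_pos : 0 < C₁ := (exp_pos 1).trans_le hC₁
  have hh_cont : ContinuousOn h (Icc 0 t) := continuousOn_const.add <|
    continuousOn_const.mul <| continuousOn_primitive_Icc (hF.mono Icc_subset_Ici_self)
  have hh_deriv : ∀ u ∈ Ico 0 t, HasDerivWithinAt h (C₂ * F u) (Ici u) u := fun u hu =>
    ((hasDerivWithinAt_integral_Ici hF hu.1).const_mul C₂).const_add C₁
  have hh_growth : ∀ u ∈ Ico 0 t, C₂ * F u ≤ C₂ * ((1 + h u) * log (1 + h u)) := fun u hu =>
    mul_le_mul_of_nonneg_left (mul_log_one_add_le_mul_log_one_add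
      (by linarith [hθ u hu.1]) (hineq u hu.1)) (by linarith)
  have hlog := log_le_log_mul_exp_of_deriv_right_le (v := fun u => 1 + h u)
    (continuousOn_const.add hh_cont)
    (fun u hu => (hh_deriv u hu).const_add 1) (fun u hu => by linarith [hC₁_le_h u hu])
    hh_growth t ⟨ht, le_rfl⟩
  simp only [h, integral_same, mul_zero, add_zero, sub_zero] at hlog
  rw [log_le_iff_le_exp (by linarith [hC₁_le_h t ⟨ht, le_rfl⟩])] at hlog
  linarith
end

section
/- (Differentiability of the cubic nonlinearity, Lemma 3.8 of the paper, in the form established by its proof.) Let (X, μ) be a measure space and T > 0. Let v : [0,T] → L²(μ; ℂ) be continuously differentiable as a curve in L²(μ; ℂ), with derivative v'. Assume in addition that v(t) ∈ L^∞(μ) for every t ∈ [0,T] and that t ↦ v(t) is continuous as a map from [0,T] into L^∞(μ). Then the map F : [0,T] → L²(μ; ℂ) defined pointwise by F(t) := |v(t)|² v(t) is continuously differentiable, with derivative F'(t) = v(t)² · conj(v'(t)) + 2 |v(t)|² · v'(t). -/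
/-!
Pointwise `|u|²u - |u'|²u' = (u + u') ū (u - u') + u'² conj (u - u')`, so
`F s - F t = A s (v s - v t)` for the `ℝ`-linear operator `A s = cubicSecant μ 2 (w s) (w t)` on
`L²`, whose coefficients lie in `L^∞`. Since `w` is continuous into `L^∞`, `A s → A t` in operator
norm, and differentiability of `v` then gives `F' t = A t (v' t)` by a Carathéodory-type
argument; continuity of `F'` follows in the same way.
-/

open MeasureTheory Filter Topology Asymptotics ComplexConjugate

theorem HasDerivWithinAt.of_sub_eq_clm_apply_sub {𝕜 E G : Type*} [NontriviallyNormedField 𝕜]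
    [NormedAddCommGroup E] [NormedSpace 𝕜 E] [NormedAddCommGroup G] [NormedSpace 𝕜 G]
    {c : 𝕜 → E} {c' : E} {f : 𝕜 → G} {A : 𝕜 → E →L[𝕜] G} {S : Set 𝕜} {t : 𝕜}
    (hc : HasDerivWithinAt c c' S t) (hA : ContinuousWithinAt A S t)
    (hf : ∀ s ∈ S, f s - f t = A s (c s - c t)) :
    HasDerivWithinAt f (A t c') S t := by
  have hsplit : ∀ s ∈ S, f s - f t - (s - t) • A t c' =
      A t (c s - c t - (s - t) • c') + (A s - A t) (c s - c t) := by
    intro s hs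
    simp only [hf s hs, map_sub, map_smul, sub_apply]
    abel
  have hlin := ((A t).isBigO_comp _ _).trans_isLittleO (hasDerivWithinAt_iff_isLittleO.mp hc)
  have hA0 : (fun s => A s - A t) =o[𝓝[S] t] (fun _ => (1 : 𝕜)) :=
    (isLittleO_one_iff 𝕜).mpr (tendsto_sub_nhds_zero_iff.mpr hA)
  have hquad : (fun s => (A s - A t) (c s - c t)) =o[𝓝[S] t] fun s => s - t := by
    have hprod := hA0.norm_left.mul_isBigO hc.hasFDerivWithinAt.isBigO_sub.norm_left
    simp only [one_mul] at hprod
    refine (isBigO_of_le _ fun s => ?_).trans_isLittleO hprod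
    simpa using (A s - A t).le_opNorm (c s - c t)
  rw [hasDerivWithinAt_iff_isLittleO]
  refine (hlin.add hquad).congr' ?_ EventuallyEq.rfl
  filter_upwards [self_mem_nhdsWithin] with s hs using (hsplit s hs).symm

section
variable {X : Type*} [MeasurableSpace X] (μ : Measure X) (p : ENNReal) [Fact (1 ≤ p)]

noncomputable def linftyMul : Lp ℂ ⊤ μ →L[ℝ] Lp ℂ ⊤ μ →L[ℝ] Lp ℂ ⊤ μ :=
  (ContinuousLinearMap.mul ℝ ℂ).holderL μ ⊤ ⊤ ⊤

noncomputable def linftySMul : Lp ℂ ⊤ μ →L[ℝ] Lp ℂ p μ →L[ℝ] Lp ℂ p μ :=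
  (ContinuousLinearMap.mul ℝ ℂ).holderL μ ⊤ p p

noncomputable def conjLp : Lp ℂ p μ →L[ℝ] Lp ℂ p μ :=
  (Complex.conjCLE : ℂ →L[ℝ] ℂ).compLpL p μ

variable {μ p}

lemma coeFn_linftyMul (a b : Lp ℂ ⊤ μ) : linftyMul μ a b =ᵐ[μ] fun x => a x * b x :=
  ContinuousLinearMap.coeFn_holder _ a b

lemma coeFn_linftySMul (a : Lp ℂ ⊤ μ) (u : Lp ℂ p μ) :
    linftySMul μ p a u =ᵐ[μ] fun x => a x * u x :=
  ContinuousLinearMap.coeFn_holder _ a u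

lemma coeFn_conjLp (u : Lp ℂ p μ) : conjLp μ p u =ᵐ[μ] fun x => conj (u x) :=
  ContinuousLinearMap.coeFn_compLpL _ u

variable (μ p)

noncomputable def cubicSecant (a b : Lp ℂ ⊤ μ) : Lp ℂ p μ →L[ℝ] Lp ℂ p μ :=
  linftySMul μ p (linftyMul μ (a + b) (conjLp μ ⊤ a)) +
    (linftySMul μ p (linftyMul μ b b)).comp (conjLp μ p)

@[fun_prop]
lemma continuous_cubicSecant :
    Continuous fun ab : Lp ℂ ⊤ μ × Lp ℂ ⊤ μ => cubicSecant μ p ab.1 ab.2 := by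
  unfold cubicSecant
  fun_prop

variable {μ p}

lemma coeFn_cubicSecant (a b : Lp ℂ ⊤ μ) (r : Lp ℂ p μ) :
    cubicSecant μ p a b r =ᵐ[μ]
      fun x => (a x + b x) * conj (a x) * r x + b x ^ 2 * conj (r x) := by
  filter_upwards [Lp.coeFn_add (linftySMul μ p (linftyMul μ (a + b) (conjLp μ ⊤ a)) r)
      (linftySMul μ p (linftyMul μ b b) (conjLp μ p r)),
    coeFn_linftySMul (linftyMul μ (a + b) (conjLp μ ⊤ a)) r,
    coeFn_linftySMul (linftyMul μ b b) (conjLp μ p r),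
    coeFn_linftyMul (a + b) (conjLp μ ⊤ a), coeFn_linftyMul b b, Lp.coeFn_add a b,
    coeFn_conjLp a, coeFn_conjLp r] with x h₁ h₂ h₃ h₄ h₅ h₆ h₇ h₈
  simp only [cubicSecant, add_apply, ContinuousLinearMap.comp_apply]
  rw [h₁, Pi.add_apply, h₂, h₃, h₄, h₅, h₆, Pi.add_apply, h₇, h₈]
  ring

lemma linftySMul_normSq_sub_eq_cubicSecant {a b : Lp ℂ ⊤ μ} {u u' : Lp ℂ p μ}
    (ha : a =ᵐ[μ] u) (hb : b =ᵐ[μ] u') :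
    linftySMul μ p (linftyMul μ (conjLp μ ⊤ a) a) u -
        linftySMul μ p (linftyMul μ (conjLp μ ⊤ b) b) u' = cubicSecant μ p a b (u - u') := by
  apply Lp.ext
  filter_upwards [Lp.coeFn_sub (linftySMul μ p (linftyMul μ (conjLp μ ⊤ a) a) u)
      (linftySMul μ p (linftyMul μ (conjLp μ ⊤ b) b) u'),
    coeFn_linftySMul (linftyMul μ (conjLp μ ⊤ a) a) u,
    coeFn_linftySMul (linftyMul μ (conjLp μ ⊤ b) b) u',
    coeFn_linftyMul (conjLp μ ⊤ a) a, coeFn_linftyMul (conjLp μ ⊤ b) b,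
    coeFn_conjLp a, coeFn_conjLp b, coeFn_cubicSecant a b (u - u'), Lp.coeFn_sub u u', ha, hb]
    with x h₁ h₂ h₃ h₄ h₅ h₆ h₇ h₈ h₉ ha hb
  rw [h₁, Pi.sub_apply, h₂, h₃, h₄, h₅, h₆, h₇, h₈, h₉, Pi.sub_apply, ha, hb, map_sub]
  ring
end

theorem cubic_nonlinearity_C1_general
    {X : Type*} [MeasurableSpace X] (μ : Measure X)
    (T : ℝ)
    (v v' : ℝ → Lp ℂ 2 μ)
    (hderiv : ∀ t ∈ Set.Icc (0 : ℝ) T, HasDerivWithinAt v (v' t) (Set.Icc 0 T) t)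
    (hcont' : ContinuousOn v' (Set.Icc (0 : ℝ) T))
    (w : ℝ → Lp ℂ ⊤ μ)
    (hw : ∀ t ∈ Set.Icc (0 : ℝ) T, (w t : X → ℂ) =ᵐ[μ] (v t : X → ℂ))
    (hwcont : ContinuousOn w (Set.Icc (0 : ℝ) T)) :
    ∃ F F' : ℝ → Lp ℂ 2 μ,
      (∀ t ∈ Set.Icc (0 : ℝ) T,
        (F t : X → ℂ) =ᵐ[μ]
          fun x => (‖(v t : X → ℂ) x‖) ^ 2 * (v t : X → ℂ) x) ∧
      (∀ t ∈ Set.Icc (0 : ℝ) T,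
        (F' t : X → ℂ) =ᵐ[μ]
          fun x => ((v t : X → ℂ) x) ^ 2 * (starRingEnd ℂ) ((v' t : X → ℂ) x)
            + 2 * (‖(v t : X → ℂ) x‖) ^ 2 * ((v' t : X → ℂ) x)) ∧
      (∀ t ∈ Set.Icc (0 : ℝ) T, HasDerivWithinAt F (F' t) (Set.Icc 0 T) t) ∧
      ContinuousOn F' (Set.Icc (0 : ℝ) T) := by
  have hsecant : ContinuousOn (fun s => cubicSecant μ 2 (w s) (w s)) (Set.Icc 0 T) := by
    fun_prop
  refine ⟨fun t => linftySMul μ 2 (linftyMul μ (conjLp μ ⊤ (w t)) (w t)) (v t),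
    fun t => cubicSecant μ 2 (w t) (w t) (v' t), fun t ht => ?_, fun t ht => ?_,
    fun t ht => ?_, hsecant.clm_apply hcont'⟩
  · filter_upwards [coeFn_linftySMul (linftyMul μ (conjLp μ ⊤ (w t)) (w t)) (v t),
      coeFn_linftyMul (conjLp μ ⊤ (w t)) (w t), coeFn_conjLp (w t), hw t ht] with x h₁ h₂ h₃ h₄
    rw [h₁, h₂, h₃, h₄, Complex.conj_mul']
  · filter_upwards [coeFn_cubicSecant (w t) (w t) (v' t), hw t ht] with x h₁ h₂
    rw [h₁, h₂, ← Complex.mul_conj']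
    ring
  · have hA : ContinuousWithinAt (fun s => cubicSecant μ 2 (w s) (w t)) (Set.Icc 0 T) t := by
      have := hwcont t ht
      fun_prop
    exact (hderiv t ht).of_sub_eq_clm_apply_sub hA fun s hs =>
      linftySMul_normSq_sub_eq_cubicSecant (hw s hs) (hw t ht)

/-- **Differentiability of the cubic nonlinearity** (Lemma 3.8 of
Gubinelli–Ugurcan–Zachhuber). Let `v : [0,T] → L²(μ;ℂ)` be continuously
differentiable with derivative `v'`, and suppose that each `v t` lies in `L^∞`
and that `t ↦ v t` is continuous into `L^∞` (witnessed by the curve `w`).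
Then `F(t) := |v(t)|² v(t)` is a continuously differentiable curve in `L²`, with
derivative `F'(t) = v(t)² conj(v'(t)) + 2 |v(t)|² v'(t)`. -/
theorem cubic_nonlinearity_C1
    {X : Type*} [MeasurableSpace X] (μ : Measure X)
    (T : ℝ) (hT : 0 < T)
    (v v' : ℝ → Lp ℂ 2 μ)
    (hderiv : ∀ t ∈ Set.Icc (0 : ℝ) T, HasDerivWithinAt v (v' t) (Set.Icc 0 T) t)
    (hcont' : ContinuousOn v' (Set.Icc (0 : ℝ) T))
    (w : ℝ → Lp ℂ ⊤ μ)
    (hw : ∀ t ∈ Set.Icc (0 : ℝ) T, (w t : X → ℂ) =ᵐ[μ] (v t : X → ℂ))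
    (hwcont : ContinuousOn w (Set.Icc (0 : ℝ) T)) :
    ∃ F F' : ℝ → Lp ℂ 2 μ,
      (∀ t ∈ Set.Icc (0 : ℝ) T,
        (F t : X → ℂ) =ᵐ[μ]
          fun x => (‖(v t : X → ℂ) x‖) ^ 2 * (v t : X → ℂ) x) ∧
      (∀ t ∈ Set.Icc (0 : ℝ) T,
        (F' t : X → ℂ) =ᵐ[μ]
          fun x => ((v t : X → ℂ) x) ^ 2 * (starRingEnd ℂ) ((v' t : X → ℂ) x)
            + 2 * (‖(v t : X → ℂ) x‖) ^ 2 * ((v' t : X → ℂ) x)) ∧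
      (∀ t ∈ Set.Icc (0 : ℝ) T, HasDerivWithinAt F (F' t) (Set.Icc 0 T) t) ∧
      ContinuousOn F' (Set.Icc (0 : ℝ) T) :=
  cubic_nonlinearity_C1_general μ T v v' hderiv hcont' w hw hwcont
end

section
/- (Asymptotics of the first three-dimensional renormalization constant, asserted in Theorem 2.40 of the paper.) Let m : ℝ³ → ℝ be a bounded function supported in a ball {x : |x| ≤ b} for some b > 0, and suppose that m(x) → 1 as x → 0 (x ≠ 0). For ε > 0 define c¹_ε := Σ_{k∈ℤ³, k≠0} |m(ε k)|² / |k|² (a finite sum, since m has compact support). Then there exist a constant C ≥ 1 and ε₀ ∈ (0,1) such that for all 0 < ε < ε₀ one has C^{−1} ε^{−1} ≤ c¹_ε ≤ C ε^{−1}; that is, c¹_ε ∼ 1/ε as ε → 0. -/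
noncomputable section

open Filter

/-!
The upper bound: `|m(εk)|² / |k|²` is at most `M² / |k|²` and vanishes outside the box
`|k|_∞ ≤ b/ε`. The shell `|k|_∞ = n + 1` has at most `26 (n + 1)²` points, each with
`|k|² ≥ (n + 1)²`, so each shell contributes at most `26 M²` and the sum is `O(b/ε)`.

The lower bound: `m > 1/2` on a punctured `δ`-ball, so on the cube `{1, …, N}³` with
`N ≈ δ/(2ε)` every term is at least `(1/4) / (3N²)`; the `N³` terms add up to `N/12 ≈ δ/(24ε)`.
-/

open Finset

namespace Renormalization

variable {d : ℕ}

lemma latSq_nonneg (k : Fin d → ℤ) : 0 ≤ latSq k :=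
  sum_nonneg fun _ _ => sq_nonneg _

lemma sq_le_latSq (k : Fin d → ℤ) (i : Fin d) : ((k i : ℝ)) ^ 2 ≤ latSq k :=
  single_le_sum (f := fun j => ((k j : ℝ)) ^ 2) (fun _ _ => sq_nonneg _) (mem_univ i)

lemma sq_le_latSq_of_le_abs {k : Fin d → ℤ} {i : Fin d} {r : ℝ} (hr : 0 ≤ r)
    (h : r ≤ |(k i : ℝ)|) : r ^ 2 ≤ latSq k :=
  (pow_le_pow_left₀ hr h 2).trans ((sq_abs _).trans_le (sq_le_latSq k i))

lemma one_le_latSq {k : Fin d → ℤ} (hk : k ≠ 0) : 1 ≤ latSq k := by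
  obtain ⟨i, hi⟩ := Function.ne_iff.mp hk
  have h1 : (1 : ℝ) ≤ |(k i : ℝ)| := by exact_mod_cast Int.one_le_abs hi
  simpa using sq_le_latSq_of_le_abs zero_le_one h1

lemma latSq_pos {k : Fin d → ℤ} (hk : k ≠ 0) : 0 < latSq k :=
  zero_lt_one.trans_le (one_le_latSq hk)

def box (d n : ℕ) : Finset (Fin d → ℤ) :=
  Fintype.piFinset fun _ => Icc (-(n : ℤ)) n

lemma mem_box {n : ℕ} {k : Fin d → ℤ} : k ∈ box d n ↔ ∀ i, |k i| ≤ n := by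
  simp [box, abs_le]

lemma box_mono : Monotone (box d) := fun _ _ h _ hk =>
  mem_box.mpr fun i => (mem_box.mp hk i).trans (by exact_mod_cast h)

lemma card_box (n : ℕ) : #(box d n) = (2 * n + 1) ^ d := by
  rw [box, Fintype.card_piFinset]
  simp only [Int.card_Icc, prod_const, card_univ, Fintype.card_fin]
  congr 1
  omega

lemma box_zero : box d 0 = {0} := by
  ext k
  simp [mem_box, funext_iff]

lemma sq_le_latSq_of_not_mem_box {n : ℕ} {k : Fin d → ℤ} (hk : k ∉ box d n) :
    ((n : ℝ) + 1) ^ 2 ≤ latSq k := by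
  obtain ⟨i, hi⟩ : ∃ i, (n : ℤ) < |k i| := by simpa [mem_box] using hk
  refine sq_le_latSq_of_le_abs (i := i) (by positivity) ?_
  exact_mod_cast (Int.add_one_le_iff.mpr hi)

lemma card_box_succ_sdiff_le (n : ℕ) :
    (#(box 3 (n + 1) \ box 3 n) : ℝ) ≤ 26 * ((n : ℝ) + 1) ^ 2 := by
  rw [card_sdiff_of_subset (box_mono n.le_succ), card_box, card_box,
    Nat.cast_sub (Nat.pow_le_pow_left (by omega) 3)]
  push_cast
  have hn : (0 : ℝ) ≤ n := n.cast_nonneg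
  nlinarith [mul_nonneg hn hn]

lemma sum_box_le {A : ℝ} (hA : 0 ≤ A) {g : (Fin 3 → ℤ) → ℝ} (hg0 : g 0 = 0)
    (hg : ∀ k, k ≠ 0 → g k ≤ A / latSq k) (n : ℕ) :
    ∑ k ∈ box 3 n, g k ≤ 26 * A * n := by
  induction n with
  | zero => simp [box_zero, hg0]
  | succ n ih =>
    have hterm : ∀ k ∈ box 3 (n + 1) \ box 3 n, g k ≤ A / ((n : ℝ) + 1) ^ 2 := by
      intro k hk
      obtain ⟨-, hkn⟩ := mem_sdiff.mp hk
      have hk0 : k ≠ 0 := by rintro rfl; exact hkn (mem_box.mpr fun i => by simp)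
      exact (hg k hk0).trans
        (div_le_div_of_nonneg_left hA (by positivity) (sq_le_latSq_of_not_mem_box hkn))
    have hshell : ∑ k ∈ box 3 (n + 1) \ box 3 n, g k ≤ 26 * A :=
      calc ∑ k ∈ box 3 (n + 1) \ box 3 n, g k
          ≤ #(box 3 (n + 1) \ box 3 n) * (A / ((n : ℝ) + 1) ^ 2) := by
            simpa using sum_le_card_nsmul _ _ _ hterm
        _ ≤ 26 * ((n : ℝ) + 1) ^ 2 * (A / ((n : ℝ) + 1) ^ 2) := by
            gcongr
            exact card_box_succ_sdiff_le n
        _ = 26 * A := by field_simp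
    rw [← sum_sdiff (box_mono n.le_succ)]
    push_cast
    linarith

def cube (d N : ℕ) : Finset (Fin d → ℤ) :=
  Fintype.piFinset fun _ => Icc (1 : ℤ) N

lemma mem_cube {N : ℕ} {k : Fin d → ℤ} : k ∈ cube d N ↔ ∀ i, 1 ≤ k i ∧ k i ≤ N := by
  simp [cube]

lemma card_cube (N : ℕ) : #(cube d N) = N ^ d := by
  simp [cube, Fintype.card_piFinset]

lemma ne_zero_of_mem_cube [NeZero d] {N : ℕ} {k : Fin d → ℤ} (hk : k ∈ cube d N) : k ≠ 0 :=
  fun h => by simpa [h] using (mem_cube.mp hk 0).1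

lemma latSq_le_of_mem_cube {N : ℕ} {k : Fin d → ℤ} (hk : k ∈ cube d N) :
    latSq k ≤ d * (N : ℝ) ^ 2 := by
  have hcoord : ∀ i, ((k i : ℝ)) ^ 2 ≤ (N : ℝ) ^ 2 := fun i => by
    obtain ⟨h1, h2⟩ := mem_cube.mp hk i
    have h1' : (0 : ℝ) ≤ k i := by exact_mod_cast (zero_le_one.trans h1)
    exact pow_le_pow_left₀ h1' (by exact_mod_cast h2) 2
  calc latSq k ≤ ∑ _i : Fin d, (N : ℝ) ^ 2 := sum_le_sum fun i _ => hcoord i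
    _ = d * (N : ℝ) ^ 2 := by simp

lemma card_cube_mul_le_sum [NeZero d] {c : ℝ} (hc : 0 ≤ c) {N : ℕ} {g : (Fin d → ℤ) → ℝ}
    (hg : ∀ k ∈ cube d N, c / latSq k ≤ g k) :
    (N : ℝ) ^ d * (c / (d * (N : ℝ) ^ 2)) ≤ ∑ k ∈ cube d N, g k := by
  have hterm : ∀ k ∈ cube d N, c / (d * (N : ℝ) ^ 2) ≤ g k := fun k hk =>
    (div_le_div_of_nonneg_left hc (latSq_pos (ne_zero_of_mem_cube hk))
      (latSq_le_of_mem_cube hk)).trans (hg k hk)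
  simpa [card_cube] using card_nsmul_le_sum _ _ _ hterm

/-- The `k`-th term of the renormalization constant `c¹_ε`. -/
def renormSummand (m : (Fin d → ℝ) → ℝ) (ε : ℝ) (k : Fin d → ℤ) : ℝ :=
  if k ≠ 0 then (m fun i => ε * (k i : ℝ)) ^ 2 / latSq k else 0

section Summand

variable {m : (Fin d → ℝ) → ℝ} {ε b : ℝ}

lemma renormSummand_nonneg (k : Fin d → ℤ) : 0 ≤ renormSummand m ε k := by
  unfold renormSummand
  split_ifs
  exacts [div_nonneg (sq_nonneg _) (latSq_nonneg k), le_rfl]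

lemma renormSummand_le {M : ℝ} (hM : ∀ x, |m x| ≤ M) {k : Fin d → ℤ} (hk : k ≠ 0) :
    renormSummand m ε k ≤ M ^ 2 / latSq k := by
  rw [renormSummand, if_pos hk, ← sq_abs]
  gcongr
  exacts [(latSq_pos hk).le, hM _]

lemma renormSummand_eq_zero_of_not_mem_box (hε : 0 < ε)
    (hsupp : ∀ x, m x ≠ 0 → Real.sqrt (∑ i, x i ^ 2) ≤ b) {k : Fin d → ℤ}
    (hk : k ∉ box d ⌈b / ε⌉₊) : renormSummand m ε k = 0 := by
  by_contra hne
  have hm : (m fun i => ε * (k i : ℝ)) ≠ 0 := by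
    intro h0
    simp [renormSummand, h0] at hne
  refine hk (mem_box.mpr fun i => ?_)
  have hcoord : ε * |(k i : ℝ)| ≤ b := by
    have h := (Real.sqrt_le_sqrt (single_le_sum (f := fun j => (ε * (k j : ℝ)) ^ 2)
      (fun _ _ => sq_nonneg _) (mem_univ i))).trans (hsupp _ hm)
    rwa [Real.sqrt_sq_eq_abs, abs_mul, abs_of_pos hε] at h
  have hreal : |(k i : ℝ)| ≤ ⌈b / ε⌉₊ :=
    ((le_div_iff₀ hε).mpr (by linarith)).trans (Nat.le_ceil _)
  exact_mod_cast hreal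

lemma summable_renormSummand (hε : 0 < ε)
    (hsupp : ∀ x, m x ≠ 0 → Real.sqrt (∑ i, x i ^ 2) ≤ b) :
    Summable (renormSummand m ε) :=
  summable_of_ne_finset_zero fun _ hk => renormSummand_eq_zero_of_not_mem_box hε hsupp hk

lemma scaled_mem_ball_inter_compl_zero [NeZero d] {δ : ℝ} (hε : 0 < ε) {N : ℕ}
    (hεN : ε * N < δ) {k : Fin d → ℤ} (hk : k ∈ cube d N) :
    (fun i => ε * (k i : ℝ)) ∈ Metric.ball 0 δ ∩ {0}ᶜ := by
  have hcoord : ∀ i, 1 ≤ (k i : ℝ) ∧ (k i : ℝ) ≤ N := fun i => by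
    obtain ⟨h1, h2⟩ := mem_cube.mp hk i
    exact ⟨by exact_mod_cast h1, by exact_mod_cast h2⟩
  have hδ : 0 < δ := (mul_nonneg hε.le N.cast_nonneg).trans_lt hεN
  refine ⟨mem_ball_zero_iff.mpr ((pi_norm_lt_iff hδ).mpr fun i => ?_), ?_⟩
  · obtain ⟨h1, h2⟩ := hcoord i
    rw [Real.norm_eq_abs, abs_of_nonneg (by positivity)]
    nlinarith
  · intro h
    have h0 := congrFun (Set.mem_singleton_iff.mp h) 0
    simp only [Pi.zero_apply, mul_eq_zero] at h0
    rcases h0 with h0 | h0 <;> linarith [(hcoord 0).1]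

end Summand

section ThreeDim

variable {m : (Fin 3 → ℝ) → ℝ} {ε b : ℝ}

lemma tsum_renormSummand_le {M : ℝ} (hM : ∀ x, |m x| ≤ M) (hb : 0 ≤ b)
    (hsupp : ∀ x, m x ≠ 0 → Real.sqrt (∑ i, x i ^ 2) ≤ b) (hε : 0 < ε) (hε1 : ε ≤ 1) :
    ∑' k, renormSummand m ε k ≤ 26 * M ^ 2 * (b + 1) * ε⁻¹ := by
  rw [tsum_eq_sum fun _ hk => renormSummand_eq_zero_of_not_mem_box hε hsupp hk]
  have hceil : (⌈b / ε⌉₊ : ℝ) ≤ (b + 1) * ε⁻¹ :=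
    calc (⌈b / ε⌉₊ : ℝ) ≤ b / ε + 1 := (Nat.ceil_lt_add_one (div_nonneg hb hε.le)).le
      _ ≤ b / ε + ε⁻¹ := by gcongr; exact (one_le_inv₀ hε).mpr hε1
      _ = (b + 1) * ε⁻¹ := by ring
  calc ∑ k ∈ box 3 ⌈b / ε⌉₊, renormSummand m ε k
      ≤ 26 * M ^ 2 * ⌈b / ε⌉₊ :=
        sum_box_le (sq_nonneg M) (by simp [renormSummand]) (fun _ hk => renormSummand_le hM hk) _
    _ ≤ 26 * M ^ 2 * ((b + 1) * ε⁻¹) := by gcongr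
    _ = 26 * M ^ 2 * (b + 1) * ε⁻¹ := by ring

lemma le_tsum_renormSummand {δ : ℝ} (hnear : Metric.ball 0 δ ∩ {0}ᶜ ⊆ {x | 1 / 2 < m x})
    (hsupp : ∀ x, m x ≠ 0 → Real.sqrt (∑ i, x i ^ 2) ≤ b) (hε : 0 < ε) (hεδ : 4 * ε ≤ δ) :
    δ / 48 * ε⁻¹ ≤ ∑' k, renormSummand m ε k := by
  have hδ : 0 < δ := by linarith
  set N := ⌊δ / (2 * ε)⌋₊
  have hNle : (N : ℝ) ≤ δ / (2 * ε) := Nat.floor_le (by positivity)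
  have hNge : δ / (4 * ε) ≤ N := by
    have h1 : δ / (2 * ε) - 1 < N := Nat.sub_one_lt_floor _
    have h2 : 1 ≤ δ / (4 * ε) := (one_le_div₀ (by positivity)).mpr hεδ
    have h3 : δ / (2 * ε) = 2 * (δ / (4 * ε)) := by field_simp; ring
    linarith
  have hN : (0 : ℝ) < N := lt_of_lt_of_le (by positivity) hNge
  have hεN : ε * N < δ := by
    have := (le_div_iff₀ (by positivity : (0 : ℝ) < 2 * ε)).mp hNle
    nlinarith
  have hcube : ∀ k ∈ cube 3 N, (1 / 4) / latSq k ≤ renormSummand m ε k := by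
    intro k hk
    have hk0 := ne_zero_of_mem_cube hk
    have hm : (1 / 2 : ℝ) < m fun i => ε * (k i : ℝ) :=
      hnear (scaled_mem_ball_inter_compl_zero hε hεN hk)
    rw [renormSummand, if_pos hk0]
    exact div_le_div_of_nonneg_right (by nlinarith) (latSq_nonneg k)
  calc δ / 48 * ε⁻¹ = δ / (4 * ε) / 12 := by field_simp; ring
    _ ≤ (N : ℝ) ^ 3 * (1 / 4 / (3 * (N : ℝ) ^ 2)) := by
        rw [show (N : ℝ) ^ 3 * (1 / 4 / (3 * (N : ℝ) ^ 2)) = N / 12 by field_simp; ring]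
        linarith
    _ ≤ ∑ k ∈ cube 3 N, renormSummand m ε k := by
        simpa using card_cube_mul_le_sum (by norm_num) hcube
    _ ≤ ∑' k, renormSummand m ε k :=
        (summable_renormSummand hε hsupp).sum_le_tsum _ fun k _ => renormSummand_nonneg k

end ThreeDim

end Renormalization

open Renormalization in
/-- **Asymptotics of the first three-dimensional renormalization constant.** If
`m : ℝ³ → ℝ` is bounded, supported in a ball, and `m(x) → 1` as `x → 0`, then
`c¹_ε := Σ_{k ∈ ℤ³, k ≠ 0} |m(εk)|²/|k|²` satisfies
`C⁻¹ ε⁻¹ ≤ c¹_ε ≤ C ε⁻¹` for all small `ε > 0`. -/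
theorem renormalization_constant_3d
    (m : (Fin 3 → ℝ) → ℝ)
    (M : ℝ) (hM : ∀ x, |m x| ≤ M)
    (b : ℝ) (hb : 0 < b)
    (hsupp : ∀ x, m x ≠ 0 → Real.sqrt (∑ i, x i ^ 2) ≤ b)
    (hlim : Tendsto m (nhdsWithin 0 {(0 : Fin 3 → ℝ)}ᶜ) (nhds 1)) :
    ∃ C : ℝ, 1 ≤ C ∧ ∃ ε₀ : ℝ, 0 < ε₀ ∧ ε₀ < 1 ∧
      ∀ ε : ℝ, 0 < ε → ε < ε₀ →
        C⁻¹ * ε⁻¹ ≤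
          (∑' k : Fin 3 → ℤ,
            if k ≠ 0 then (m fun i => ε * (k i : ℝ)) ^ 2 / latSq k else 0) ∧
        (∑' k : Fin 3 → ℤ,
            if k ≠ 0 then (m fun i => ε * (k i : ℝ)) ^ 2 / latSq k else 0) ≤
          C * ε⁻¹ := by
  obtain ⟨δ, hδ, hnear⟩ := Metric.mem_nhdsWithin_iff.mp
    (hlim.eventually (eventually_gt_nhds one_half_lt_one))
  set K := max (48 / δ) (26 * M ^ 2 * (b + 1))
  have hK : 0 < K := lt_max_of_lt_left (by positivity)
  refine ⟨1 + K, by linarith, min (δ / 4) (1 / 2), by positivity,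
    (min_le_right _ _).trans_lt (by norm_num), fun ε hε hεε₀ => ⟨?_, ?_⟩⟩
  · have hεδ : 4 * ε ≤ δ := by linarith [hεε₀.trans_le (min_le_left _ _)]
    calc (1 + K)⁻¹ * ε⁻¹ ≤ (48 / δ)⁻¹ * ε⁻¹ := by
          gcongr
          linarith [le_max_left (48 / δ) (26 * M ^ 2 * (b + 1))]
      _ = δ / 48 * ε⁻¹ := by rw [inv_div]
      _ ≤ _ := le_tsum_renormSummand hnear hsupp hε hεδ
  · have hε1 : ε ≤ 1 := by linarith [hεε₀.trans_le (min_le_right _ _)]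
    calc _ ≤ 26 * M ^ 2 * (b + 1) * ε⁻¹ := tsum_renormSummand_le hM hb.le hsupp hε hε1
      _ ≤ (1 + K) * ε⁻¹ := by
          gcongr
          linarith [le_max_right (48 / δ) (26 * M ^ 2 * (b + 1))]
end
end
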